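/- Σ_{π ∈ S_n} op*_π(m) = (2m)^n, where op*_π(m) = 2·4^{pk(π)}·Σ_{a≥0} C(n-1+m-a, n)·C(n-1-2pk(π), a-pk(π)). -/

import Mathlib

/-- The value of the permutation at position `j` (1-indexed), shifted by 1,
with the convention that out-of-range positions (in particular `j = 0`) give `0`. -/
def pval {n : ℕ} (π : Equiv.Perm (Fin n)) (j : ℕ) : ℕ :=
  if h : 1 ≤ j ∧ j ≤ n then ((π ⟨j - 1, by omega⟩ : Fin n) : ℕ) + 1 else 0

/-- Number of descents of `π`: indices `i ∈ {1,…,n-1}` with `π(i) > π(i+1)`. -/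
def des {n : ℕ} (π : Equiv.Perm (Fin n)) : ℕ :=
  ((Finset.Icc 1 (n - 1)).filter (fun i => pval π (i + 1) < pval π i)).card

/-- Number of left peaks of `π`: indices `i ∈ {1,…,n-1}` with
`π(i-1) < π(i) > π(i+1)`, with the convention `π(0) = 0`. -/
def lpk {n : ℕ} (π : Equiv.Perm (Fin n)) : ℕ :=
  ((Finset.Icc 1 (n - 1)).filter
    (fun i => pval π (i - 1) < pval π i ∧ pval π (i + 1) < pval π i)).card

/-- Number of interior peaks of `π`: indices `i ∈ {2,…,n-1}` with
`π(i-1) < π(i) > π(i+1)`. -/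
def pk {n : ℕ} (π : Equiv.Perm (Fin n)) : ℕ :=
  ((Finset.Icc 2 (n - 1)).filter
    (fun i => pval π (i - 1) < pval π i ∧ pval π (i + 1) < pval π i)).card

/-- Binomial coefficient for integer arguments, with the convention that it is
zero when `b < 0` or `a < b`. -/
def zchoose (a b : ℤ) : ℤ :=
  if 0 ≤ b ∧ b ≤ a then ((a.toNat).choose b.toNat : ℤ) else 0

/-- The left-enriched order polynomial of a chain on `n` elements with `k` left
peaks, evaluated at `m`:  `4^k · Σ_{a≥0} C(n+m-a, n)·C(n-2k, a-k)`
(reindexed by `a = k + b`; terms with `b > n` vanish). -/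
def opL (n k m : ℕ) : ℤ :=
  4 ^ k * ∑ b ∈ Finset.range (n + 1),
    zchoose ((n : ℤ) + m - (k + b)) n * zchoose ((n : ℤ) - 2 * k) b

/-- The enriched order polynomial of a chain on `n` elements with `k` peaks,
evaluated at `m`: `2·4^k · Σ_{a≥0} C(n-1+m-a, n)·C(n-1-2k, a-k)`
(reindexed by `a = k + b`; terms with `b > n` vanish). -/
def opStar (n k m : ℕ) : ℤ :=
  2 * 4 ^ k * ∑ b ∈ Finset.range (n + 1),
    zchoose ((n : ℤ) - 1 + m - (k + b)) n * zchoose ((n : ℤ) - 1 - 2 * k) b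


/-!
Induct on `n`, building each `π ∈ S_{n+1}` by inserting the new maximum into one of the `n + 1`
gaps of some `σ ∈ S_n`. Inserting it at either end or next to a peak of `σ` (`2 pk σ + 2` gaps,
as peaks are never adjacent) leaves the number of peaks unchanged; every other gap creates one.
Hence `∑_{π ∈ S_{n+1}} G (pk π) = ∑_{σ ∈ S_n} ((2k + 2) G k + (n - 1 - 2k) G (k + 1))` with
`k = pk σ`, and the theorem follows from the binomial identity
`(2k + 2) op*_{n+1,k}(m) + (n - 1 - 2k) op*_{n+1,k+1}(m) = 2m · op*_{n,k}(m)`.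
-/

open Finset Equiv

lemma zchoose_eq_zero_of_neg {a b : ℤ} (hb : b < 0) : zchoose a b = 0 :=
  if_neg (by omega)

lemma zchoose_eq_zero_of_lt {a b : ℤ} (h : a < b) : zchoose a b = 0 :=
  if_neg (by omega)

lemma zchoose_natCast (a b : ℕ) : zchoose a b = a.choose b := by
  unfold zchoose
  split_ifs with h
  · simp
  · rw [Nat.choose_eq_zero_of_lt (by omega), Nat.cast_zero]

lemma zchoose_add_one {a b : ℤ} (h : 0 ≤ a ∨ b ≠ 0) :
    zchoose (a + 1) b = zchoose a b + zchoose a (b - 1) := by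
  rcases lt_or_ge b 1 with hb | hb
  · obtain rfl | hb := eq_or_ne b 0
    · simp [zchoose]
      omega
    · simp [zchoose_eq_zero_of_neg, show b < 0 by omega, show b - 1 < 0 by omega]
  rcases lt_or_ge a 0 with ha | ha
  · rw [zchoose_eq_zero_of_lt, zchoose_eq_zero_of_lt, zchoose_eq_zero_of_lt] <;> omega
  lift a to ℕ using ha
  obtain ⟨c, rfl⟩ : ∃ c : ℕ, b = c + 1 := ⟨(b - 1).toNat, by omega⟩
  rw [add_sub_cancel_right]
  simp only [← Nat.cast_add_one, zchoose_natCast]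
  exact_mod_cast (Nat.choose_succ_succ' a c).trans (add_comm _ _)

lemma mul_zchoose_sub_one_sub_one (a b : ℤ) :
    a * zchoose (a - 1) (b - 1) = b * zchoose a b := by
  rcases lt_or_ge b 1 with hb | hb
  · obtain rfl | hb := eq_or_ne b 0
    · simp [zchoose_eq_zero_of_neg]
    · simp [zchoose_eq_zero_of_neg, show b < 0 by omega, show b - 1 < 0 by omega]
  rcases lt_or_ge a 1 with ha | ha
  · rw [zchoose_eq_zero_of_lt (by omega), zchoose_eq_zero_of_lt (by omega), mul_zero, mul_zero]
  obtain ⟨a, rfl⟩ : ∃ a' : ℕ, a = a' + 1 := ⟨(a - 1).toNat, by omega⟩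
  obtain ⟨c, rfl⟩ : ∃ c : ℕ, b = c + 1 := ⟨(b - 1).toNat, by omega⟩
  rw [add_sub_cancel_right, add_sub_cancel_right]
  simp only [← Nat.cast_add_one, zchoose_natCast]
  exact_mod_cast (Nat.add_one_mul_choose_eq a c).trans (mul_comm _ _)

lemma mul_zchoose_sub_one_right (a b : ℤ) :
    (a - b + 1) * zchoose a (b - 1) = b * zchoose a b := by
  rcases lt_or_ge b 1 with hb | hb
  · obtain rfl | hb := eq_or_ne b 0
    · simp [zchoose_eq_zero_of_neg]
    · simp [zchoose_eq_zero_of_neg, show b < 0 by omega, show b - 1 < 0 by omega]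
  rcases lt_or_ge a (b - 1) with ha | ha
  · rw [zchoose_eq_zero_of_lt ha, zchoose_eq_zero_of_lt (by omega), mul_zero, mul_zero]
  lift a to ℕ using by omega
  obtain ⟨c, rfl⟩ : ∃ c : ℕ, b = c + 1 := ⟨(b - 1).toNat, by omega⟩
  have hca : c ≤ a := by omega
  have h : (a.choose (c + 1) * (c + 1) : ℤ) = a.choose c * (a - c : ℕ) := by
    exact_mod_cast Nat.choose_succ_right_eq a c
  rw [add_sub_cancel_right]
  simp only [← Nat.cast_add_one, zchoose_natCast]
  push_cast [hca] at h ⊢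
  linear_combination -h

lemma zchoose_gamma_step (k : ℤ) {a : ℤ} (ha : 0 ≤ a) (b : ℤ) :
    (k + 1) * zchoose (a + 1) b + 2 * a * zchoose (a - 1) (b - 1)
      = (b + k + 1) * zchoose a b + (a + k + 2 - b) * zchoose a (b - 1) := by
  linear_combination (k + 1) * zchoose_add_one (a := a) (b := b) (Or.inl ha)
    + 2 * mul_zchoose_sub_one_sub_one a b - mul_zchoose_sub_one_right a b

lemma zchoose_worpitzky_step (d y : ℤ) (n : ℕ) :
    (d + 1) * zchoose (y + 1) (n + 1) + (n - d) * zchoose y (n + 1)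
      = (y + 1 + d - n) * zchoose y n := by
  have pascal := zchoose_add_one (a := y) (b := n + 1) (Or.inr (by omega))
  have absorb := mul_zchoose_sub_one_right y (n + 1)
  rw [add_sub_cancel_right] at pascal absorb
  linear_combination (d + 1) * pascal - absorb

lemma sum_range_succ_mul_zchoose_sub_one (g : ℕ → ℤ) (A : ℤ) (R : ℕ) :
    ∑ b ∈ range (R + 1), g b * zchoose A (b - 1) = ∑ b ∈ range R, g (b + 1) * zchoose A b := by
  simp [sum_range_succ', zchoose_eq_zero_of_neg]

lemma sum_range_succ_mul_zchoose_of_lt (g : ℕ → ℤ) {A : ℤ} {R : ℕ} (h : A < R) :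
    ∑ b ∈ range (R + 1), g b * zchoose A b = ∑ b ∈ range R, g b * zchoose A b := by
  rw [sum_range_succ, zchoose_eq_zero_of_lt h, mul_zero, add_zero]

/- Coefficientwise, this is the γ-recurrence of the Eulerian polynomials (`zchoose_gamma_step`)
followed by one step of Worpitzky's identity (`zchoose_worpitzky_step`). -/
lemma sum_zchoose_recurrence (n k : ℕ) (x a : ℤ) (ha : 0 ≤ a) (hn : (n : ℤ) = a + 2 * k + 1) :
    (k + 1) * ∑ b ∈ range (n + 2), zchoose (x + 1 - b) (n + 1) * zchoose (a + 1) b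
      + 2 * a * ∑ b ∈ range (n + 2), zchoose (x - b) (n + 1) * zchoose (a - 1) b
      = (x + 1 + k - n) * ∑ b ∈ range (n + 1), zchoose (x - b) n * zchoose a b := by
  have shifted : ∑ b ∈ range (n + 2), zchoose (x - b) (n + 1) * zchoose (a - 1) b
      = ∑ b ∈ range (n + 2), zchoose (x + 1 - b) (n + 1) * zchoose (a - 1) (b - 1) := by
    rw [sum_range_succ_mul_zchoose_sub_one (fun b : ℕ ↦ zchoose (x + 1 - b) (n + 1)),
      sum_range_succ_mul_zchoose_of_lt _ (by push_cast; omega)]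
    push_cast
    ring_nf
  calc _ = ∑ b ∈ range (n + 2), zchoose (x + 1 - b) (n + 1)
          * ((k + 1) * zchoose (a + 1) b + 2 * a * zchoose (a - 1) (b - 1)) := by
        rw [shifted, mul_sum, mul_sum, ← sum_add_distrib]
        exact sum_congr rfl fun b _ ↦ by ring
    _ = ∑ b ∈ range (n + 2), ((b + k + 1) * zchoose (x + 1 - b) (n + 1) * zchoose a b
          + (a + k + 2 - b) * zchoose (x + 1 - b) (n + 1) * zchoose a (b - 1)) := by
        refine sum_congr rfl fun b _ ↦ ?_
        rw [zchoose_gamma_step k ha]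
        ring
    _ = ∑ b ∈ range (n + 1), ((b + k + 1) * zchoose (x + 1 - b) (n + 1)
          + (n - (b + k)) * zchoose (x - b) (n + 1)) * zchoose a b := by
        rw [sum_add_distrib, sum_range_succ_mul_zchoose_of_lt _ (by push_cast; omega),
          sum_range_succ_mul_zchoose_sub_one (fun b : ℕ ↦ _ * zchoose (x + 1 - b) (n + 1)),
          ← sum_add_distrib]
        refine sum_congr rfl fun b _ ↦ ?_
        rw [Nat.cast_add_one, show x + 1 - (b + 1 : ℤ) = x - b by ring]
        linear_combination -(zchoose (x - b) (n + 1) * zchoose a b) * hn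
    _ = _ := by
        rw [mul_sum]
        refine sum_congr rfl fun b _ ↦ ?_
        rw [add_sub_right_comm]
        linear_combination zchoose a b * zchoose_worpitzky_step (b + k) (x - b) n

lemma opStar_succ {n k : ℕ} (hk : 2 * k + 1 ≤ n) (m : ℕ) :
    (2 * k + 2) * opStar (n + 1) k m + ((n : ℤ) - 1 - 2 * k) * opStar (n + 1) (k + 1) m
      = 2 * m * opStar n k m := by
  have key := sum_zchoose_recurrence n k ((n : ℤ) - 1 + m - k) ((n : ℤ) - 1 - 2 * k)
    (by omega) (by ring)
  simp only [opStar]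
  push_cast
  ring_nf at key ⊢
  linear_combination 4 * 4 ^ k * key

lemma opStar_one_zero (m : ℕ) : opStar 1 0 m = 2 * m := by
  simp [opStar, zchoose]

def insertAt (p B : ℕ) (w : ℕ → ℕ) (j : ℕ) : ℕ :=
  if j ≤ p then w j else if j = p + 1 then B else w (j - 1)

def peakCount (n : ℕ) (w : ℕ → ℕ) : ℕ :=
  #{i ∈ Icc 2 (n - 1) | w (i - 1) < w i ∧ w (i + 1) < w i}

def peakIndicator (n : ℕ) (w : ℕ → ℕ) (i : ℕ) : ℤ :=
  if 2 ≤ i ∧ i < n ∧ w (i - 1) < w i ∧ w (i + 1) < w i then 1 else 0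

def insertionGain (n : ℕ) (w : ℕ → ℕ) (p : ℕ) : ℤ :=
  (if 1 ≤ p ∧ p < n then 1 else 0) - peakIndicator n w p - peakIndicator n w (p + 1)

section Word

variable {n p B : ℕ} {w : ℕ → ℕ}

lemma insertAt_of_le {j : ℕ} (h : j ≤ p) : insertAt p B w j = w j := if_pos h

lemma insertAt_self : insertAt p B w (p + 1) = B := by simp [insertAt]

lemma insertAt_of_lt {j : ℕ} (h : p + 1 < j) : insertAt p B w j = w (j - 1) := by
  simp [insertAt, show ¬j ≤ p by omega, show j ≠ p + 1 by omega]

lemma peakCount_eq_sum {R : ℕ} (hR : n ≤ R) (w : ℕ → ℕ) :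
    (peakCount n w : ℤ) = ∑ i ∈ range R, peakIndicator n w i := by
  simp only [peakCount, peakIndicator, sum_boole]
  congr 2
  ext i
  simp only [mem_filter, mem_Icc, mem_range]
  omega

lemma peakIndicator_insertAt_of_lt {j : ℕ} (hj : j < p) (hp : p ≤ n) :
    peakIndicator (n + 1) (insertAt p B w) j = peakIndicator n w j := by
  simp only [peakIndicator, insertAt_of_le (show j - 1 ≤ p by omega), insertAt_of_le hj.le,
    insertAt_of_le (show j + 1 ≤ p by omega)]
  congr 1
  apply propext
  omega

lemma peakIndicator_insertAt_self (hB : ∀ j, w j < B) :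
    peakIndicator (n + 1) (insertAt p B w) p = 0 := by
  simp only [peakIndicator, insertAt_of_le le_rfl, insertAt_self]
  exact if_neg (by have := hB p; omega)

lemma peakIndicator_insertAt_succ (hB : ∀ j, w j < B) :
    peakIndicator (n + 1) (insertAt p B w) (p + 1) = if 1 ≤ p ∧ p < n then 1 else 0 := by
  simp only [peakIndicator, insertAt_self, add_tsub_cancel_right, insertAt_of_le le_rfl,
    insertAt_of_lt (show p + 1 < p + 1 + 1 by omega)]
  have := hB p
  have := hB (p + 1)
  congr 1
  apply propext
  omega

lemma peakIndicator_insertAt_add_two (hB : ∀ j, w j < B) :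
    peakIndicator (n + 1) (insertAt p B w) (p + 2) = 0 := by
  simp only [peakIndicator, insertAt_self, show p + 2 - 1 = p + 1 by omega,
    insertAt_of_lt (show p + 1 < p + 2 by omega)]
  exact if_neg (by have := hB (p + 1); omega)

lemma peakIndicator_insertAt_add_one {j : ℕ} (hj : p + 2 ≤ j) :
    peakIndicator (n + 1) (insertAt p B w) (j + 1) = peakIndicator n w j := by
  simp only [peakIndicator, add_tsub_cancel_right, insertAt_of_lt (show p + 1 < j by omega),
    insertAt_of_lt (show p + 1 < j + 1 by omega),
    insertAt_of_lt (show p + 1 < j + 1 + 1 by omega)]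
  congr 1
  apply propext
  omega

lemma peakCount_insertAt (hB : ∀ j, w j < B) (hp : p ≤ n) :
    (peakCount (n + 1) (insertAt p B w) : ℤ) = peakCount n w + insertionGain n w p := by
  -- summing up to `n + 3` keeps the three special positions `p, p + 1, p + 2` in range
  have hv : ∑ j ∈ range (n + 3), peakIndicator (n + 1) (insertAt p B w) j
      = ∑ j ∈ range p, peakIndicator n w j + (if 1 ≤ p ∧ p < n then 1 else 0)
        + ∑ j ∈ Ico (p + 2) (n + 2), peakIndicator n w j := by
    rw [← sum_range_add_sum_Ico _ (show p ≤ n + 3 by omega),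
      sum_eq_sum_Ico_succ_bot (by omega), sum_eq_sum_Ico_succ_bot (by omega),
      sum_eq_sum_Ico_succ_bot (by omega), ← sum_Ico_add' _ (p + 2) (n + 2) 1,
      sum_congr rfl fun j hj ↦ peakIndicator_insertAt_of_lt (mem_range.1 hj) hp,
      sum_congr rfl fun j hj ↦ peakIndicator_insertAt_add_one (mem_Ico.1 hj).1,
      peakIndicator_insertAt_self hB, peakIndicator_insertAt_succ hB,
      show p + 1 + 1 = p + 2 from rfl, peakIndicator_insertAt_add_two hB]
    ring
  have hw : ∑ j ∈ range (n + 2), peakIndicator n w j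
      = ∑ j ∈ range p, peakIndicator n w j + peakIndicator n w p + peakIndicator n w (p + 1)
        + ∑ j ∈ Ico (p + 2) (n + 2), peakIndicator n w j := by
    rw [← sum_range_add_sum_Ico _ (show p ≤ n + 2 by omega),
      sum_eq_sum_Ico_succ_bot (by omega), sum_eq_sum_Ico_succ_bot (by omega)]
    ring
  rw [peakCount_eq_sum (show n + 1 ≤ n + 3 by omega), peakCount_eq_sum (show n ≤ n + 2 by omega),
    hv, hw, insertionGain]
  ring

lemma insertionGain_nonneg (p : ℕ) : 0 ≤ insertionGain n w p := by
  simp only [insertionGain, peakIndicator, add_tsub_cancel_right]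
  -- `p` and `p + 1` cannot both be peaks
  split_ifs <;> omega

lemma insertionGain_le_one (p : ℕ) : insertionGain n w p ≤ 1 := by
  unfold insertionGain peakIndicator
  split_ifs <;> omega

lemma sum_insertionGain (hn : 1 ≤ n) :
    ∑ p ∈ range (n + 1), insertionGain n w p = (n : ℤ) - 1 - 2 * peakCount n w := by
  have interior : ∑ p ∈ range (n + 1), (if 1 ≤ p ∧ p < n then 1 else 0 : ℤ) = n - 1 := by
    rw [sum_boole, show {p ∈ range (n + 1) | 1 ≤ p ∧ p < n} = Ico 1 n by ext; simp; omega,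
      Nat.card_Ico, Nat.cast_sub hn, Nat.cast_one]
  have shifted : ∑ p ∈ range (n + 1), peakIndicator n w (p + 1) = peakCount n w := by
    rw [peakCount_eq_sum (show n ≤ n + 2 by omega), sum_range_succ' _ (n + 1)]
    simp [peakIndicator]
  simp only [insertionGain, sum_sub_distrib, interior, shifted,
    ← peakCount_eq_sum (Nat.le_succ n)]
  ring

lemma two_mul_peakCount_add_one_le (hn : 1 ≤ n) : 2 * peakCount n w + 1 ≤ n := by
  have h := sum_insertionGain (w := w) hn
  have : 0 ≤ ∑ p ∈ range (n + 1), insertionGain n w p :=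
    sum_nonneg fun p _ ↦ insertionGain_nonneg p
  omega

lemma sum_peakCount_insertAt (hn : 1 ≤ n) (hB : ∀ j, w j < B) (G : ℕ → ℤ) :
    ∑ p ∈ range (n + 1), G (peakCount (n + 1) (insertAt p B w))
      = (2 * peakCount n w + 2) * G (peakCount n w)
        + ((n : ℤ) - 1 - 2 * peakCount n w) * G (peakCount n w + 1) := by
  set k := peakCount n w
  have gain : ∀ p ∈ range (n + 1), G (peakCount (n + 1) (insertAt p B w))
      = G k + insertionGain n w p * (G (k + 1) - G k) := by
    intro p hp
    have h := peakCount_insertAt hB (mem_range_succ_iff.1 hp)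
    have := insertionGain_nonneg (n := n) (w := w) p
    have := insertionGain_le_one (n := n) (w := w) p
    obtain h0 | h1 : insertionGain n w p = 0 ∨ insertionGain n w p = 1 := by omega
    · rw [h0, show peakCount (n + 1) (insertAt p B w) = k by omega]
      ring
    · rw [h1, show peakCount (n + 1) (insertAt p B w) = k + 1 by omega]
      ring
  rw [sum_congr rfl gain, sum_add_distrib, ← sum_mul, sum_insertionGain hn, sum_const,
    card_range, nsmul_eq_mul]
  push_cast
  ring

end Word

def insertMax {n : ℕ} (σ : Perm (Fin n)) (p : Fin (n + 1)) : Perm (Fin (n + 1)) :=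
  (finSuccEquiv' p).trans (σ.optionCongr.trans (finSuccEquiv' (Fin.last n)).symm)

section Perm

variable {n : ℕ}

@[simp]
lemma insertMax_apply_self (σ : Perm (Fin n)) (p : Fin (n + 1)) :
    insertMax σ p p = Fin.last n := by
  simp [insertMax]

@[simp]
lemma insertMax_apply_succAbove (σ : Perm (Fin n)) (p : Fin (n + 1)) (i : Fin n) :
    insertMax σ p (p.succAbove i) = (σ i).castSucc := by
  simp [insertMax]

lemma insertMax_injective :
    Function.Injective fun x : Perm (Fin n) × Fin (n + 1) ↦ insertMax x.1 x.2 := by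
  rintro ⟨σ, p⟩ ⟨σ', p'⟩ h
  dsimp only at h
  obtain rfl : p = p' := (insertMax σ' p').injective <| by
    rw [← DFunLike.congr_fun h p, insertMax_apply_self, insertMax_apply_self]
  obtain rfl : σ = σ' := Equiv.ext fun i ↦ Fin.castSucc_injective _ <| by
    rw [← insertMax_apply_succAbove, h, insertMax_apply_succAbove]
  rfl

lemma sum_perm_succ {M : Type*} [AddCommMonoid M] (H : Perm (Fin (n + 1)) → M) :
    ∑ π, H π = ∑ σ : Perm (Fin n), ∑ p, H (insertMax σ p) := by
  rw [← Fintype.sum_prod_type']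
  refine (Fintype.sum_bijective _ ((Fintype.bijective_iff_injective_and_card _).2
    ⟨insertMax_injective, ?_⟩) _ _ fun _ ↦ rfl).symm
  simp [Fintype.card_perm, Nat.factorial_succ, mul_comm]

lemma pval_succ (π : Perm (Fin n)) (i : Fin n) : pval π (i + 1) = π i + 1 := by
  simp [pval]

lemma pval_eq_zero (π : Perm (Fin n)) {j : ℕ} (h : j = 0 ∨ n < j) : pval π j = 0 :=
  dif_neg (by omega)

lemma pval_lt (π : Perm (Fin n)) (j : ℕ) : pval π j < n + 1 := by
  unfold pval
  split_ifs
  · exact Nat.succ_lt_succ (Fin.is_lt _)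
  · omega

lemma pval_insertMax (σ : Perm (Fin n)) (p : Fin (n + 1)) :
    pval (insertMax σ p) = insertAt p (n + 1) (pval σ) := by
  funext j
  by_cases hj : j = 0 ∨ n + 1 < j
  · rw [pval_eq_zero _ hj, insertAt]
    split_ifs <;> (try rw [pval_eq_zero]) <;> omega
  obtain ⟨q, rfl⟩ : ∃ q : Fin (n + 1), j = q + 1 := ⟨⟨j - 1, by omega⟩, by simp; omega⟩
  obtain rfl | ⟨i, rfl⟩ := p.eq_self_or_eq_succAbove q
  · rw [pval_succ, insertMax_apply_self, Fin.val_last, insertAt_self]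
  rw [pval_succ, insertMax_apply_succAbove, Fin.val_castSucc, ← pval_succ σ i]
  rcases lt_or_ge i.castSucc p with hi | hi
  · rw [Fin.succAbove_of_castSucc_lt _ _ hi, Fin.val_castSucc,
      insertAt_of_le (by simpa [Fin.lt_def] using hi)]
  · rw [Fin.succAbove_of_le_castSucc _ _ hi, Fin.val_succ,
      insertAt_of_lt (by simpa [Fin.le_def] using hi)]
    rfl

lemma pk_eq_peakCount (π : Perm (Fin n)) : pk π = peakCount n (pval π) := rfl

lemma two_mul_pk_add_one_le (hn : 1 ≤ n) (π : Perm (Fin n)) : 2 * pk π + 1 ≤ n :=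
  two_mul_peakCount_add_one_le hn

lemma sum_perm_succ_pk (hn : 1 ≤ n) (G : ℕ → ℤ) :
    ∑ π : Perm (Fin (n + 1)), G (pk π) = ∑ σ : Perm (Fin n),
      ((2 * pk σ + 2) * G (pk σ) + ((n : ℤ) - 1 - 2 * pk σ) * G (pk σ + 1)) := by
  rw [sum_perm_succ]
  refine sum_congr rfl fun σ _ ↦ ?_
  simp only [pk_eq_peakCount, pval_insertMax]
  rw [Fin.sum_univ_eq_sum_range (fun p ↦ G (peakCount (n + 1) (insertAt p (n + 1) (pval σ)))),
    sum_peakCount_insertAt hn (pval_lt σ)]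

end Perm

theorem stmt14_general (n m : ℕ) (hn : 1 ≤ n) :
    ∑ π : Equiv.Perm (Fin n), opStar n (pk π) m = (2 * (m : ℤ)) ^ n := by
  induction n, hn using Nat.le_induction with
  | base => simp [pk, opStar_one_zero]
  | succ n hn ih =>
    rw [sum_perm_succ_pk hn fun k ↦ opStar (n + 1) k m, pow_succ, ← ih, sum_mul]
    refine sum_congr rfl fun σ _ ↦ ?_
    rw [opStar_succ (two_mul_pk_add_one_le hn σ)]
    ring

theorem stmt14 (n m : ℕ) (hn : 1 ≤ n) (hm : 1 ≤ m) :
    ∑ π : Equiv.Perm (Fin n), opStar n (pk π) m = (2 * (m : ℤ)) ^ n :=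
  stmt14_general n m hn
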